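/- Let N ≥ 1 and c : {0,…,N−1} → ℂ. Define the Chebyshev transform ĉ[j] = Σ_{ℓ=0}^{N−1} c[ℓ]·cos(π·ℓ·(2j+1)/(2N)) for 0 ≤ j ≤ N−1, let ω = exp(−2πi/(4N)), and define x : {0,…,4N−1} → ℂ by x[0] = 2c[0], x[ℓ] = c[ℓ] and x[4N−ℓ] = c[ℓ] for 1 ≤ ℓ ≤ N−1, and x[ℓ] = 0 otherwise. Then for every j with 0 ≤ j ≤ 2N−1: Σ_{ℓ=0}^{4N−1} x[ℓ]·ω^{ℓ(2j+1)} = 2·ĉ[min(j, 2N−1−j)]. In particular the odd-indexed DFT coefficients of the symmetric extension x recover the Chebyshev transform: x̂[2j+1] = x̂[4N−2j−1] = 2ĉ[j] for 0 ≤ j ≤ N−1. -/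

import Mathlib

/-!
With `ω` a primitive `4N`-th root of unity, the terms `ℓ` and `4N - ℓ` of the DFT of the
symmetric extension pair up to `c[ℓ] (ω^{ℓm} + ω^{-ℓm}) = 2 c[ℓ] cos(2πℓm/4N)`, while the
block `N ≤ ℓ ≤ 3N` vanishes and `x[0] = 2c[0]` supplies the doubled `ℓ = 0` term. For
`m = 2j + 1` this is `2ĉ[j]`, and `ĉ[2N-1-j] = ĉ[j]` because the two cosine arguments add up
to `2πℓ`.
-/

open Finset

theorem sum_range_eq_add_sum_Ico_reflect_add_sum_Icc {M : Type*} [AddCommMonoid M] (f : ℕ → M)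
    {n K : ℕ} (hn : 1 ≤ n) (hK : 2 * n ≤ K) :
    ∑ ℓ ∈ range K, f ℓ =
      f 0 + ∑ ℓ ∈ Ico 1 n, (f ℓ + f (K - ℓ)) + ∑ ℓ ∈ Icc n (K - n), f ℓ := by
  have hlow : ∑ ℓ ∈ range (K + 1 - n), f ℓ =
      f 0 + ∑ ℓ ∈ Ico 1 n, f ℓ + ∑ ℓ ∈ Icc n (K - n), f ℓ := by
    rw [← sum_range_add_sum_Ico _ (by omega : n ≤ K + 1 - n), sum_range_eq_add_Ico _ (by omega),
      show K + 1 - n = K - n + 1 by omega, Ico_add_one_right_eq_Icc]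
  rw [sum_add_distrib, sum_Ico_reflect _ _ (by omega : n ≤ K + 1), ← sum_range_add_sum_Ico _
    (by omega : K + 1 - n ≤ K), hlow, show K + 1 - 1 = K by omega]
  abel

theorem exp_neg_two_pi_I_div_pow_add_pow_sub {M : ℕ} (hM : M ≠ 0) {ℓ : ℕ} (hℓ : ℓ ≤ M) (k : ℕ) :
    Complex.exp (-(2 * Real.pi * Complex.I) / M) ^ (ℓ * k) +
        Complex.exp (-(2 * Real.pi * Complex.I) / M) ^ ((M - ℓ) * k) =
      2 * (Real.cos (2 * Real.pi * ℓ * k / M) : ℂ) := by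
  have hMC : (M : ℂ) ≠ 0 := Nat.cast_ne_zero.mpr hM
  have h1 : ((ℓ * k : ℕ) : ℂ) * (-(2 * Real.pi * Complex.I) / M) =
      -(2 * Real.pi * ℓ * k / M : ℂ) * Complex.I := by
    push_cast; ring
  have h2 : (((M - ℓ) * k : ℕ) : ℂ) * (-(2 * Real.pi * Complex.I) / M) =
      (2 * Real.pi * ℓ * k / M : ℂ) * Complex.I + ((-k : ℤ) : ℂ) * (2 * Real.pi * Complex.I) := by
    push_cast [Nat.cast_sub hℓ]; field_simp; ring
  rw [← Complex.exp_nat_mul, ← Complex.exp_nat_mul, h1, h2, Complex.exp_add,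
    Complex.exp_int_mul_two_pi_mul_I, mul_one, Complex.ofReal_cos, Complex.two_cos]
  push_cast
  ring

theorem cos_pi_mul_odd_div_reflect (N ℓ : ℕ) {j : ℕ} (hj : j < 2 * N) :
    Real.cos (Real.pi * ℓ * (2 * ((2 * N - 1 - j : ℕ) : ℝ) + 1) / (2 * N)) =
      Real.cos (Real.pi * ℓ * (2 * j + 1) / (2 * N)) := by
  have hN : (N : ℝ) ≠ 0 := Nat.cast_ne_zero.mpr (by omega)
  rw [Nat.cast_sub (by omega), Nat.cast_sub (by omega), ← Real.cos_nat_mul_two_pi_sub _ ℓ]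
  congr 1
  push_cast
  field_simp
  ring

theorem stmt_15 (N : ℕ) (c x : ℕ → ℂ)
    (hx0 : x 0 = 2 * c 0)
    (hx1 : ∀ ℓ, 1 ≤ ℓ → ℓ < N → x ℓ = c ℓ)
    (hx2 : ∀ ℓ, 1 ≤ ℓ → ℓ < N → x (4 * N - ℓ) = c ℓ)
    (hx3 : ∀ ℓ, N ≤ ℓ → ℓ ≤ 3 * N → x ℓ = 0)
    (j : ℕ) (hj : j < 2 * N) :
    ∑ ℓ ∈ Finset.range (4 * N),
        x ℓ * Complex.exp (-(2 * (Real.pi : ℂ) * Complex.I) / (4 * (N : ℂ))) ^ (ℓ * (2 * j + 1)) =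
      2 * ∑ ℓ ∈ Finset.range N,
        c ℓ * (Real.cos (Real.pi * (ℓ : ℝ) * (2 * ((min j (2 * N - 1 - j) : ℕ) : ℝ) + 1) /
          (2 * (N : ℝ))) : ℂ) := by
  have hN : 0 < N := by omega
  have hcos (ℓ : ℕ) :
      Real.cos (Real.pi * ℓ * (2 * ((min j (2 * N - 1 - j) : ℕ) : ℝ) + 1) / (2 * N)) =
        Real.cos (2 * Real.pi * ℓ * (2 * j + 1 : ℕ) / (4 * N : ℕ)) := by
    have hN' : (N : ℝ) ≠ 0 := by positivity
    rcases min_choice j (2 * N - 1 - j) with h | h <;> rw [h]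
    · congr 1; push_cast; field_simp; ring
    · rw [cos_pi_mul_odd_div_reflect N ℓ hj]; congr 1; push_cast; field_simp; ring
  have hω : -(2 * (Real.pi : ℂ) * Complex.I) / (4 * (N : ℂ)) =
      -(2 * Real.pi * Complex.I) / ((4 * N : ℕ) : ℂ) := by push_cast; rfl
  have hmid : ∑ ℓ ∈ Icc N (4 * N - N),
      x ℓ * Complex.exp (-(2 * Real.pi * Complex.I) / ((4 * N : ℕ) : ℂ)) ^ (ℓ * (2 * j + 1)) = 0 :=
    sum_eq_zero fun ℓ hℓ => by
      obtain ⟨hNℓ, hℓ3N⟩ := mem_Icc.1 hℓ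
      rw [hx3 ℓ hNℓ (by omega), zero_mul]
  rw [hω, sum_range_eq_add_sum_Ico_reflect_add_sum_Icc _ hN (by omega : 2 * N ≤ 4 * N), hmid,
    add_zero, sum_range_eq_add_Ico _ hN, mul_add (2 : ℂ), mul_sum]
  congr 1
  · simp [hx0]
  · refine sum_congr rfl fun ℓ hℓ => ?_
    obtain ⟨hℓ1, hℓN⟩ := mem_Ico.1 hℓ
    rw [hx1 ℓ hℓ1 hℓN, hx2 ℓ hℓ1 hℓN, ← mul_add,
      exp_neg_two_pi_I_div_pow_add_pow_sub (by omega) (by omega), hcos]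
    ring
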